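/- Let Z, U be Hilbert spaces, Z_ad ⊆ Z weakly closed and bounded, X a Hilbert space, S : Z_ad → U a map with ‖S(z)‖_U ≤ M(‖z‖_Z) for a locally bounded M : [0,∞) → [0,∞), e : U × Z_ad → X* weakly (sequentially) continuous with e(S(z), z) = 0 for all z ∈ Z_ad and the property that e(Ũ, z̃) = 0 implies Ũ = S(z̃), and J : U × Z_ad → ℝ weakly lower semicontinuous and bounded below on the feasible set. Then the problem min { J(U, z) : U ∈ U, z ∈ Z_ad, e(U, z) = 0 } attains a global minimum. -/

import Mathlib

open Filter Topology

/-- Weak sequential convergence in a real inner product space. -/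
def WeakConvSeq {E : Type*} [NormedAddCommGroup E] [InnerProductSpace ℝ E]
    (x : ℕ → E) (x₀ : E) : Prop :=
  ∀ y : E, Tendsto (fun k => (inner ℝ (x k) y : ℝ)) atTop (nhds (inner ℝ x₀ y))

/-!
The direct method of the calculus of variations. Along a minimizing sequence of feasible pairs
`(Uₖ, zₖ)`, the controls stay in the bounded set `Z_ad` and the states `Uₖ = S zₖ` are bounded by
the local bound on `M`, so a subsequence converges weakly in `U × Z`. The limit is feasible by weak
closedness of `Z_ad` and weak continuity of `e`, and weak lower semicontinuity of `J` makes it a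
minimizer.
-/

open TopologicalSpace InnerProductSpace

section

variable {E F : Type*} [NormedAddCommGroup E] [InnerProductSpace ℝ E]
  [NormedAddCommGroup F] [InnerProductSpace ℝ F]

theorem WeakConvSeq.comp_strictMono {x : ℕ → E} {x₀ : E} (hx : WeakConvSeq x x₀) {φ : ℕ → ℕ}
    (hφ : StrictMono φ) : WeakConvSeq (x ∘ φ) x₀ :=
  fun y => (hx y).comp hφ.tendsto_atTop

theorem exists_weakConvSeq_subseq_of_separableSpace [CompleteSpace E] [SeparableSpace E]
    {x : ℕ → E} {C : ℝ} (hx : ∀ k, ‖x k‖ ≤ C) :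
    ∃ x₀ φ, StrictMono φ ∧ WeakConvSeq (x ∘ φ) x₀ := by
  have hball : ∀ k, StrongDual.toWeakDual (toDual ℝ E (x k)) ∈
      WeakDual.toStrongDual ⁻¹' Metric.closedBall (0 : StrongDual ℝ E) C := by
    simpa using hx
  obtain ⟨ℓ, -, φ, hφ, hlim⟩ := WeakDual.isSeqCompact_closedBall ℝ E 0 C hball
  refine ⟨(toDual ℝ E).symm (WeakDual.toStrongDual ℓ), φ, hφ, fun y => ?_⟩
  simpa [Function.comp_def] using ((WeakDual.eval_continuous y).tendsto ℓ).comp hlim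

theorem exists_weakConvSeq_subseq [CompleteSpace E] {x : ℕ → E} {C : ℝ} (hx : ∀ k, ‖x k‖ ≤ C) :
    ∃ x₀ φ, StrictMono φ ∧ WeakConvSeq (x ∘ φ) x₀ := by
  -- Pass to the closed span `K` of the sequence, which is separable; testing against `y` is the
  -- same as testing against its orthogonal projection onto `K`.
  set K := (Submodule.span ℝ (Set.range x)).topologicalClosure
  have hxK : ∀ k, x k ∈ K := fun k =>
    Submodule.le_topologicalClosure _ (Submodule.subset_span ⟨k, rfl⟩)
  have : CompleteSpace K := (Submodule.isClosed_topologicalClosure _).completeSpace_coe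
  have : SeparableSpace K :=
    ((Set.countable_range x).isSeparable.span.closure).separableSpace
  obtain ⟨x₀, φ, hφ, hx₀⟩ :=
    exists_weakConvSeq_subseq_of_separableSpace (x := fun k => (⟨x k, hxK k⟩ : K)) hx
  refine ⟨x₀, φ, hφ, fun y => ?_⟩
  simpa using hx₀ (K.orthogonalProjectionOnto y)

theorem exists_weakConvSeq_subseq_prod [CompleteSpace E] [CompleteSpace F]
    {x : ℕ → E} {y : ℕ → F} {C D : ℝ} (hx : ∀ k, ‖x k‖ ≤ C) (hy : ∀ k, ‖y k‖ ≤ D) :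
    ∃ x₀ y₀ φ, StrictMono φ ∧ WeakConvSeq (x ∘ φ) x₀ ∧ WeakConvSeq (y ∘ φ) y₀ := by
  obtain ⟨y₀, φ, hφ, hy₀⟩ := exists_weakConvSeq_subseq hy
  obtain ⟨x₀, ψ, hψ, hx₀⟩ := exists_weakConvSeq_subseq (x := x ∘ φ) (fun k => hx (φ k))
  exact ⟨x₀, y₀, φ ∘ ψ, hφ.comp hψ, hx₀, hy₀.comp_strictMono hψ⟩

theorem eq_zero_of_tendsto_inner_of_forall_eq_zero {y : ℕ → E} {y₀ : E}
    (hlim : ∀ P : E, Tendsto (fun k => (inner ℝ P (y k) : ℝ)) atTop (𝓝 (inner ℝ P y₀)))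
    (hy : ∀ k, y k = 0) : y₀ = 0 :=
  ext_inner_left ℝ fun P => by
    have hP := hlim P
    simp only [hy, inner_zero_right] at hP
    simpa using tendsto_nhds_unique hP tendsto_const_nhds

end

theorem exists_seq_tendsto_sInf_image {α : Type*} {s : Set α} (f : α → ℝ) (hs : s.Nonempty)
    (hf : BddBelow (f '' s)) :
    ∃ x : ℕ → α, (∀ k, x k ∈ s) ∧ Tendsto (f ∘ x) atTop (𝓝 (sInf (f '' s))) := by
  obtain ⟨u, -, hu, hus⟩ := exists_seq_tendsto_sInf (hs.image f) hf
  choose x hxs hxu using hus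
  exact ⟨x, hxs, by simpa [Function.comp_def, hxu] using hu⟩

/-- existence of a global minimizer for the abstract
PDE-constrained optimization problem `min { J(U,z) : z ∈ Z_ad, e(U,z) = 0 }`. -/
theorem existence_minimizer
    {Z U X : Type*}
    [NormedAddCommGroup Z] [InnerProductSpace ℝ Z] [CompleteSpace Z]
    [NormedAddCommGroup U] [InnerProductSpace ℝ U] [CompleteSpace U]
    [NormedAddCommGroup X] [InnerProductSpace ℝ X] [CompleteSpace X]
    (Zad : Set Z)
    -- (A1) Z_ad weakly sequentially closed
    (hZadClosed : ∀ (zk : ℕ → Z) (z : Z), (∀ k, zk k ∈ Zad) →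
      WeakConvSeq zk z → z ∈ Zad)
    -- (A6) Z_ad bounded
    (hZadBdd : ∃ R : ℝ, ∀ z ∈ Zad, ‖z‖ ≤ R)
    -- (A3) bounded solution operator
    (S : Z → U) (M : ℝ → ℝ)
    (hMloc : ∀ r : ℝ, 0 ≤ r → ∃ C : ℝ, ∀ x ∈ Set.Icc 0 r, M x ≤ C)
    (hSbdd : ∀ z ∈ Zad, ‖S z‖ ≤ M ‖z‖)
    -- state equation, solved exactly by S on Z_ad
    (e : U → Z → X)
    (hSsolves : ∀ z ∈ Zad, e (S z) z = 0)
    (hSunique : ∀ (V : U), ∀ z ∈ Zad, e V z = 0 → V = S z)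
    -- (A4) weak sequential continuity of e
    (heWeakCont : ∀ (Uk : ℕ → U) (zk : ℕ → Z) (V : U) (z : Z),
      (∀ k, zk k ∈ Zad) → WeakConvSeq Uk V → WeakConvSeq zk z →
      ∀ P : X, Tendsto (fun k => (inner ℝ P (e (Uk k) (zk k)) : ℝ)) atTop
        (nhds (inner ℝ P (e V z))))
    -- (A5) J weakly lower semicontinuous, and bounded below on the feasible set
    (J : U → Z → ℝ)
    (hJwlsc : ∀ (Uk : ℕ → U) (zk : ℕ → Z) (V : U) (z : Z),
      WeakConvSeq Uk V → WeakConvSeq zk z →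
      J V z ≤ liminf (fun k => J (Uk k) (zk k)) atTop)
    (hJbelow : ∃ c : ℝ, ∀ (V : U), ∀ z ∈ Zad, e V z = 0 → c ≤ J V z)
    (hZadNonempty : Zad.Nonempty) :
    ∃ (Ubar : U) (zbar : Z), zbar ∈ Zad ∧ e Ubar zbar = 0 ∧
      ∀ (V : U), ∀ z ∈ Zad, e V z = 0 → J Ubar zbar ≤ J V z := by
  obtain ⟨R, hR⟩ := hZadBdd
  obtain ⟨z₀, hz₀⟩ := hZadNonempty
  obtain ⟨C, hC⟩ := hMloc R ((norm_nonneg z₀).trans (hR z₀ hz₀))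
  have hstate_bdd : ∀ (V : U), ∀ z ∈ Zad, e V z = 0 → ‖V‖ ≤ C := fun V z hz hV =>
    hSunique V z hz hV ▸ (hSbdd z hz).trans (hC _ ⟨norm_nonneg z, hR z hz⟩)
  set feasible : Set (U × Z) := {p | p.2 ∈ Zad ∧ e p.1 p.2 = 0}
  have hfeasible : feasible.Nonempty := ⟨(S z₀, z₀), hz₀, hSsolves z₀ hz₀⟩
  have hJbdd : BddBelow ((fun p => J p.1 p.2) '' feasible) := by
    obtain ⟨c, hc⟩ := hJbelow
    exact ⟨c, by rintro _ ⟨p, ⟨hpZ, hpe⟩, rfl⟩; exact hc _ _ hpZ hpe⟩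
  obtain ⟨p, hp, hpJ⟩ := exists_seq_tendsto_sInf_image (fun p => J p.1 p.2) hfeasible hJbdd
  obtain ⟨Ubar, zbar, φ, hφ, hUbar, hzbar⟩ := exists_weakConvSeq_subseq_prod
    (x := Prod.fst ∘ p) (y := Prod.snd ∘ p)
    (fun k => hstate_bdd _ _ (hp k).1 (hp k).2) (fun k => hR _ (hp k).1)
  refine ⟨Ubar, zbar, hZadClosed _ _ (fun k => (hp _).1) hzbar, ?_, fun V z hz hV => ?_⟩
  · exact eq_zero_of_tendsto_inner_of_forall_eq_zero
      (heWeakCont _ _ _ _ (fun k => (hp _).1) hUbar hzbar) (fun k => (hp _).2)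
  · calc J Ubar zbar ≤ liminf (fun k => J (p (φ k)).1 (p (φ k)).2) atTop :=
          hJwlsc _ _ _ _ hUbar hzbar
      _ = sInf ((fun p => J p.1 p.2) '' feasible) := (hpJ.comp hφ.tendsto_atTop).liminf_eq
      _ ≤ J V z := csInf_le hJbdd ⟨(V, z), ⟨hz, hV⟩, rfl⟩
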